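/- Let d = 4, ℓ = 5/3, and γ ∈ (ℓ^{-1/2}, 1). Given any (Z₂, V₂) with Z₂ > 0 and (Z₂, V₂) ∈ Ω_far, the solution of the (Z,V)-ODE with initial value V(Z₂) = V₂ extends to a smooth solution V ∈ C^∞([Z₂, ∞)) satisfying (Z, V(Z)) ∈ Ω_far for every Z ≥ Z₂, and the limit V_∞ = lim_{Z→∞} V(Z) exists with V_∞ ∈ (−1, 1). -/

import Mathlib

/-!
In the variable `s = -1/Z` the ray `Z ∈ [Z₂, ∞)` becomes the compact interval `[-1/Z₂, 0)` and the
`(Z,V)`-field becomes a rational field `dV/ds = Z² Δ_V/Δ_Z`, which extends smoothly to `s = 0`.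
On the rectangle `[-1/Z₂, 0] × [-1, V₂]` its denominator factors into two affine functions of `s`
of fixed sign and its numerator is nonnegative; both signs are read off at the two ends
`s = -1/Z₂` (where they are the conditions `Z₂ > Z₊(V)`, `Z₂ > Z_V(V)`, inherited from `V₂` by
monotonicity of `Z₊` and `Z_V`) and `s = 0`. So the field is smooth and `≤ 0` there, and vanishes on
`V = -1`. Hence the solution from `V₂` is nonincreasing, and cannot reach the equilibrium `V = -1`
by uniqueness; it exists on all of `[-1/Z₂, 0]` and `V_∞` is its value at `s = 0`.
-/

noncomputable section

open Set

namespace Stmt19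

/-- `Δ_V(Z,V)` for `d = 4`, `ℓ = 5/3`, with parameter `γ`. -/
def DelV (γ Z V : ℝ) : ℝ :=
  (4 - 1) * (1 - V ^ 2) * ((1 / (γ + 1)) * (1 - V ^ 2) * Z - V * (1 - V * Z))

/-- `Δ_Z(Z,V)` for `ℓ = 5/3`. -/
def DelZ (Z V : ℝ) : ℝ := Z * ((1 - Z * V) ^ 2 - (5/3) * (V - Z) ^ 2)

/-- `Z_V(V) = (1+γ)V/(1+γV²)`. -/
def ZVfun (γ V : ℝ) : ℝ := (1 + γ) * V / (1 + γ * V ^ 2)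

/-- `Z₊(V) = (√ℓ V + 1)/(V + √ℓ)`. -/
def Zplus (V : ℝ) : ℝ := (Real.sqrt (5/3) * V + 1) / (V + Real.sqrt (5/3))

/-- Membership in the far-field region `Ω_far`. -/
def memOmegaFar (γ Z V : ℝ) : Prop :=
  V ∈ Ioo (-1 : ℝ) 1 ∧ Zplus V < Z ∧ ZVfun γ V < Z ∧ V < Z

local notation "√ℓ" => Real.sqrt (5/3)

open Function
open scoped NNReal

theorem exists_forall_mem_Icc_hasDerivWithinAt_of_lipschitzWith {E : Type*}
    [NormedAddCommGroup E] [NormedSpace ℝ E] [CompleteSpace E] {f : ℝ → E → E} {t₀ t₁ : ℝ}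
    {K M : ℝ≥0} (ht : t₀ ≤ t₁) (x₀ : E) (hlip : ∀ t ∈ Icc t₀ t₁, LipschitzWith K (f t))
    (hcont : ∀ x, ContinuousOn (f · x) (Icc t₀ t₁)) (hbound : ∀ t ∈ Icc t₀ t₁, ∀ x, ‖f t x‖ ≤ M) :
    ∃ α : ℝ → E, α t₀ = x₀ ∧ ∀ t ∈ Icc t₀ t₁, HasDerivWithinAt α (f t (α t)) (Icc t₀ t₁) t := by
  have hpl : IsPicardLindelof f (⟨t₀, left_mem_Icc.2 ht⟩ : Icc t₀ t₁) x₀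
      (M * ⟨t₁ - t₀, sub_nonneg.2 ht⟩) 0 M K :=
    { lipschitzOnWith := fun t ht => (hlip t ht).lipschitzOnWith
      continuousOn := fun x _ => hcont x
      norm_le := fun t ht x _ => hbound t ht x
      mul_max_le := by
        simp only [sub_self, sub_nonneg, ht, sup_of_le_left, NNReal.coe_zero, sub_zero]
        rfl }
  exact hpl.exists_eq_forall_mem_Icc_hasDerivWithinAt₀

theorem lt_of_hasDerivWithinAt_of_lipschitzWith {f : ℝ → ℝ → ℝ} {α : ℝ → ℝ} {t₀ t₁ lo : ℝ}
    {K : ℝ≥0} (hlip : ∀ t ∈ Icc t₀ t₁, LipschitzWith K (f t)) (hlo : ∀ t ∈ Icc t₀ t₁, f t lo = 0)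
    (hα : ∀ t ∈ Icc t₀ t₁, HasDerivWithinAt α (f t (α t)) (Icc t₀ t₁) t) (h₀ : lo < α t₀) :
    ∀ t ∈ Icc t₀ t₁, lo < α t := by
  intro t ht
  by_contra! hle
  -- at a first time `t'` with `α t' = lo`, backward uniqueness against the constant solution `lo`
  -- forces `α t₀ = lo`
  have hcont : ContinuousOn α (Icc t₀ t₁) := fun t ht => (hα t ht).continuousWithinAt
  obtain ⟨t', ht', hαt'⟩ : ∃ t' ∈ Icc t₀ t, α t' = lo :=
    intermediate_value_Icc' ht.1 (hcont.mono (Icc_subset_Icc_right ht.2)) ⟨hle, h₀.le⟩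
  have hsub : Icc t₀ t' ⊆ Icc t₀ t₁ := Icc_subset_Icc_right (ht'.2.trans ht.2)
  have hsol : ∀ s ∈ Ioc t₀ t', HasDerivWithinAt α (f s (α s)) (Iic s) s := fun s hs =>
    (hα s (hsub (Ioc_subset_Icc_self hs))).mono_of_mem_nhdsWithin
      (Icc_mem_nhdsLE_of_mem ⟨hs.1, hs.2.trans (ht'.2.trans ht.2)⟩)
  have hconst : ∀ s ∈ Ioc t₀ t', HasDerivWithinAt (fun _ => lo) (f s lo) (Iic s) s := fun s hs => by
    rw [hlo s (hsub (Ioc_subset_Icc_self hs))]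
    exact hasDerivWithinAt_const _ _ _
  have heq := ODE_solution_unique_of_mem_Icc_left (s := fun _ => univ)
    (fun s hs => (hlip s (hsub (Ioc_subset_Icc_self hs))).lipschitzOnWith)
    (hcont.mono hsub) hsol (fun _ _ => mem_univ _) continuousOn_const hconst
    (fun _ _ => mem_univ _) hαt'
  exact h₀.ne' (heq (left_mem_Icc.2 ht'.1))

theorem exists_hasDerivWithinAt_mem_Ioc_of_nonpos {f : ℝ → ℝ → ℝ} {t₀ t₁ lo x₀ : ℝ} {n : ℕ∞}
    (ht : t₀ ≤ t₁) (hx₀ : lo < x₀) (hn : n ≠ 0)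
    (hf : ContDiffOn ℝ n (uncurry f) (Icc t₀ t₁ ×ˢ Icc lo x₀))
    (hf_lo : ∀ t ∈ Icc t₀ t₁, f t lo = 0)
    (hf_nonpos : ∀ t ∈ Icc t₀ t₁, ∀ x ∈ Icc lo x₀, f t x ≤ 0) :
    ∃ α : ℝ → ℝ, α t₀ = x₀ ∧ ContDiffOn ℝ n α (Icc t₀ t₁) ∧
      ∀ t ∈ Icc t₀ t₁, HasDerivWithinAt α (f t (α t)) (Icc t₀ t₁) t ∧ α t ∈ Ioc lo x₀ := by
  have hcpt : IsCompact (Icc t₀ t₁ ×ˢ Icc lo x₀) := isCompact_Icc.prod isCompact_Icc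
  obtain ⟨K, hK⟩ := hf.exists_lipschitzOnWith (by exact_mod_cast hn)
    ((convex_Icc _ _).prod (convex_Icc _ _)) hcpt
  obtain ⟨M, hM⟩ := hcpt.exists_bound_of_continuousOn hf.continuousOn
  -- Freezing `f` outside `[lo, x₀]` makes it globally Lipschitz and bounded, so the solution
  -- exists on all of `[t₀, t₁]`; it never leaves `(lo, x₀]`, where the two fields agree.
  set clamp : ℝ → ℝ := fun x => projIcc lo x₀ hx₀.le x
  have hclamp : LipschitzWith 1 clamp :=
    ((LipschitzWith.subtype_val _).comp (.projIcc hx₀.le)).weaken (by simp)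
  set F : ℝ → ℝ → ℝ := fun t x => f t (clamp x)
  have hFlip : ∀ t ∈ Icc t₀ t₁, LipschitzWith K (F t) := fun t ht => by
    have hft := hK.comp (LipschitzWith.prodMk_left t).lipschitzOnWith
      (fun x hx => mk_mem_prod ht hx)
    rw [mul_one] at hft
    have hFt := lipschitzOnWith_univ.1
      (hft.comp hclamp.lipschitzOnWith (fun x _ => (projIcc lo x₀ hx₀.le x).2))
    rw [mul_one] at hFt
    exact hFt
  have hclamp_mem : ∀ x, clamp x ∈ Icc lo x₀ := fun x => (projIcc lo x₀ hx₀.le x).2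
  have hFcont : ∀ x, ContinuousOn (F · x) (Icc t₀ t₁) := fun x =>
    hf.continuousOn.comp (continuousOn_id.prodMk continuousOn_const)
      (fun t ht => mk_mem_prod ht (hclamp_mem x))
  have hFbound : ∀ t ∈ Icc t₀ t₁, ∀ x, ‖F t x‖ ≤ M.toNNReal := fun t ht x =>
    (hM (t, clamp x) (mk_mem_prod ht (hclamp_mem x))).trans (Real.le_coe_toNNReal M)
  obtain ⟨α, hα₀, hα⟩ :=
    exists_forall_mem_Icc_hasDerivWithinAt_of_lipschitzWith ht x₀ hFlip hFcont hFbound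
  have hα_le : ∀ t ∈ Icc t₀ t₁, α t ≤ x₀ := by
    have hanti : AntitoneOn α (Icc t₀ t₁) :=
      antitoneOn_of_hasDerivWithinAt_nonpos (convex_Icc _ _)
        (fun t ht => (hα t ht).continuousWithinAt)
        (fun t ht => (hα t (interior_subset ht)).mono interior_subset)
        (fun t ht => hf_nonpos t (interior_subset ht) _ (hclamp_mem _))
    intro t ht
    simpa [hα₀] using hanti (left_mem_Icc.2 (ht.1.trans ht.2)) ht ht.1
  have hα_gt : ∀ t ∈ Icc t₀ t₁, lo < α t :=
    lt_of_hasDerivWithinAt_of_lipschitzWith hFlip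
      (fun t ht => by simpa [F, clamp, projIcc_of_mem _ (left_mem_Icc.2 hx₀.le)] using hf_lo t ht)
      hα (hα₀ ▸ hx₀)
  have hFα : ∀ t ∈ Icc t₀ t₁, F t (α t) = f t (α t) := fun t ht => by
    simp [F, clamp, projIcc_of_mem _ ⟨(hα_gt t ht).le, hα_le t ht⟩]
  have hsol : ∀ t ∈ Icc t₀ t₁, HasDerivWithinAt α (f t (α t)) (Icc t₀ t₁) t := fun t ht =>
    hFα t ht ▸ hα t ht
  refine ⟨α, hα₀, ?_, fun t ht => ⟨hsol t ht, hα_gt t ht, hα_le t ht⟩⟩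
  exact ODE.contDiffOn_enat_Icc_of_hasDerivWithinAt hf hsol
    (fun t ht => ⟨(hα_gt t ht).le, hα_le t ht⟩)

lemma sq_sqrt_ell : √ℓ ^ 2 = 5/3 := Real.sq_sqrt (by norm_num)

lemma one_lt_sqrt_ell : 1 < √ℓ := by
  rw [Real.lt_sqrt zero_le_one]; norm_num

lemma Zplus_le_Zplus {v w : ℝ} (hv : -1 ≤ v) (hvw : v ≤ w) : Zplus v ≤ Zplus w := by
  have := one_lt_sqrt_ell
  unfold Zplus
  rw [div_le_div_iff₀ (by linarith) (by linarith)]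
  nlinarith [sq_sqrt_ell]

lemma ZVfun_le_ZVfun {γ v w : ℝ} (hγ₀ : 0 ≤ γ) (hγ₁ : γ ≤ 1) (hv : -1 ≤ v) (hvw : v ≤ w)
    (hw : w ≤ 1) : ZVfun γ v ≤ ZVfun γ w := by
  unfold ZVfun
  rw [div_le_div_iff₀ (by positivity) (by positivity)]
  have hvw1 : v * w ≤ 1 := by nlinarith
  nlinarith [mul_nonneg (mul_nonneg (by linarith : 0 ≤ 1 + γ) (sub_nonneg.2 hvw))
    (by nlinarith : 0 ≤ 1 - γ * (v * w))]

def fieldNum (γ s v : ℝ) : ℝ := 3 * (1 - v ^ 2) * ((1 + γ * v ^ 2) / (γ + 1) + v * s)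

def fieldDen (s v : ℝ) : ℝ := (s + v) ^ 2 - 5/3 * (1 + v * s) ^ 2

/-- The `(Z,V)`-field in the variable `s = -1/Z`: since `ds/dZ = Z⁻²`, `dV/ds = Z² Δ_V/Δ_Z`, written
as `(Δ_V/Z)/(Δ_Z/Z³)` so that numerator and denominator are polynomial in `s` up to `s = 0`. -/
def fieldS (γ s v : ℝ) : ℝ := fieldNum γ s v / fieldDen s v

lemma fieldS_neg_inv_mul_inv_sq {γ Z : ℝ} (hZ : Z ≠ 0) (hγ : γ + 1 ≠ 0) (v : ℝ) :
    fieldS γ (-Z⁻¹) v * (Z ^ 2)⁻¹ = DelV γ Z v / DelZ Z v := by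
  have hDelZ : DelZ Z v = fieldDen (-Z⁻¹) v * Z ^ 3 := by
    unfold DelZ fieldDen; field_simp; ring
  rw [hDelZ]
  unfold fieldS fieldNum DelV
  field_simp
  ring

lemma mul_add_pos_of_mem_Icc {a c Z s : ℝ} (hZ : 0 < Z) (hc : 0 < c) (ha : a < Z * c)
    (hs : s ∈ Icc (-Z⁻¹) 0) : 0 < a * s + c := by
  have hZs : -1 ≤ Z * s := by
    have := mul_le_mul_of_nonneg_left hs.1 hZ.le
    rwa [mul_neg, mul_inv_cancel₀ hZ.ne'] at this
  rcases le_total 0 a with ha0 | ha0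
  · nlinarith [hs.2]
  · nlinarith [hs.2]

section Sign

variable {γ Z₂ s v : ℝ}

lemma fieldDen_neg (hZ₂ : 0 < Z₂) (hv : v ∈ Icc (-1) 1) (hZp : Zplus v < Z₂)
    (hs : s ∈ Icc (-Z₂⁻¹) 0) : fieldDen s v < 0 := by
  have := one_lt_sqrt_ell
  have hvℓ : 0 < v + √ℓ := by linarith [hv.1]
  rw [Zplus, div_lt_iff₀ hvℓ] at hZp
  have hfac : fieldDen s v
      = -((√ℓ * v - 1) * s + (√ℓ - v)) * ((1 + √ℓ * v) * s + (v + √ℓ)) := by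
    unfold fieldDen
    linear_combination (1 + v * s) ^ 2 * sq_sqrt_ell
  have hA : 0 < (√ℓ * v - 1) * s + (√ℓ - v) := by
    have hℓv : 0 < √ℓ - v := by linarith [hv.2]
    refine mul_add_pos_of_mem_Icc hZ₂ hℓv ?_ hs
    have h1v : 0 ≤ √ℓ * (1 - v ^ 2) := mul_nonneg (by linarith) (by nlinarith [hv.1, hv.2])
    have hprod : (√ℓ * v - 1) * (v + √ℓ) < Z₂ * (√ℓ - v) * (v + √ℓ) := by
      nlinarith [mul_lt_mul_of_pos_right hZp hℓv, sq_sqrt_ell]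
    exact lt_of_mul_lt_mul_right hprod hvℓ.le
  have hB : 0 < (1 + √ℓ * v) * s + (v + √ℓ) :=
    mul_add_pos_of_mem_Icc hZ₂ hvℓ (by linarith) hs
  rw [hfac]
  nlinarith [mul_pos hA hB]

lemma fieldNum_nonneg (hγ : 0 ≤ γ) (hZ₂ : 0 < Z₂) (hv : v ∈ Icc (-1) 1)
    (hZV : ZVfun γ v < Z₂) (hs : s ∈ Icc (-Z₂⁻¹) 0) : 0 ≤ fieldNum γ s v := by
  rw [ZVfun, div_lt_iff₀ (by positivity)] at hZV
  have hC : 0 < (1 + γ * v ^ 2) / (γ + 1) + v * s := by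
    rw [add_comm]
    refine mul_add_pos_of_mem_Icc hZ₂ (by positivity) ?_ hs
    rw [mul_div_assoc', lt_div_iff₀ (by positivity)]
    linarith
  have h1 : 0 ≤ 1 - v ^ 2 := by nlinarith [hv.1, hv.2]
  unfold fieldNum
  positivity

end Sign

lemma contDiffOn_uncurry_fieldS (γ : ℝ) {n : WithTop ℕ∞} {S : Set (ℝ × ℝ)}
    (hden : ∀ p ∈ S, fieldDen p.1 p.2 ≠ 0) : ContDiffOn ℝ n (uncurry (fieldS γ)) S := by
  have hnum : ContDiff ℝ n fun p : ℝ × ℝ => fieldNum γ p.1 p.2 := by unfold fieldNum; fun_prop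
  have hden' : ContDiff ℝ n fun p : ℝ × ℝ => fieldDen p.1 p.2 := by unfold fieldDen; fun_prop
  exact hnum.contDiffOn.div hden'.contDiffOn hden

lemma hasDerivWithinAt_comp_neg_inv {W : ℝ → ℝ} {w Z : ℝ} {s t : Set ℝ} (hZ : Z ≠ 0)
    (hW : HasDerivWithinAt W w t (-Z⁻¹)) (hst : MapsTo (fun Z => -Z⁻¹) s t) :
    HasDerivWithinAt (fun Z => W (-Z⁻¹)) (w * (Z ^ 2)⁻¹) s Z := by
  have hinv : HasDerivWithinAt (fun Z : ℝ => -Z⁻¹) (Z ^ 2)⁻¹ s Z :=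
    (hasDerivAt_inv hZ).neg.hasDerivWithinAt.congr_deriv (neg_neg _)
  exact hW.comp Z hinv hst

lemma tendsto_comp_neg_inv_atTop {W : ℝ → ℝ} {t : Set ℝ} (hW : ContinuousWithinAt W t 0)
    (ht : ∀ᶠ Z in Filter.atTop, -Z⁻¹ ∈ t) :
    Filter.Tendsto (fun Z => W (-Z⁻¹)) Filter.atTop (nhds (W 0)) := by
  have h : Filter.Tendsto (fun Z : ℝ => -Z⁻¹) Filter.atTop (nhds 0) := by
    simpa using (tendsto_inv_atTop_zero (𝕜 := ℝ)).neg
  exact hW.tendsto.comp (tendsto_nhdsWithin_iff.2 ⟨h, ht⟩)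

/-- Global extension of the solution of the `(Z,V)`-ODE inside the far-field region,
with a limit `V_∞ ∈ (−1,1)` at infinity. -/
theorem far_field_extension (γ : ℝ) (hγl : (Real.sqrt (5/3))⁻¹ < γ) (hγu : γ < 1)
    (Z₂ V₂ : ℝ) (hZ₂ : 0 < Z₂) (hfar : memOmegaFar γ Z₂ V₂) :
    ∃ V : ℝ → ℝ,
      ContDiffOn ℝ (⊤ : ℕ∞) V (Ici Z₂) ∧
      V Z₂ = V₂ ∧
      (∀ Z ∈ Ici Z₂,
        HasDerivWithinAt V (DelV γ Z (V Z) / DelZ Z (V Z)) (Ici Z₂) Z) ∧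
      (∀ Z ∈ Ici Z₂, memOmegaFar γ Z (V Z)) ∧
      ∃ Vinf : ℝ, Vinf ∈ Ioo (-1 : ℝ) 1 ∧
        Filter.Tendsto V Filter.atTop (nhds Vinf) := by
  obtain ⟨⟨hV₂_gt, hV₂_lt⟩, hZp₂, hZV₂, hVZ₂⟩ := hfar
  have h0 : (0 : ℝ) ∈ Icc (-Z₂⁻¹) 0 := ⟨neg_nonpos.2 (inv_nonneg.2 hZ₂.le), le_rfl⟩
  have hγ₀ : 0 < γ := lt_trans (by positivity) hγl
  have hZp : ∀ {Z v}, Z₂ ≤ Z → v ∈ Icc (-1) V₂ → Zplus v < Z := fun hZ hv =>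
    (Zplus_le_Zplus hv.1 hv.2).trans_lt (hZp₂.trans_le hZ)
  have hZV : ∀ {Z v}, Z₂ ≤ Z → v ∈ Icc (-1) V₂ → ZVfun γ v < Z := fun hZ hv =>
    (ZVfun_le_ZVfun hγ₀.le hγu.le hv.1 hv.2 hV₂_lt.le).trans_lt (hZV₂.trans_le hZ)
  have hv₁ : ∀ {v}, v ∈ Icc (-1) V₂ → v ∈ Icc (-1) 1 := fun hv => ⟨hv.1, hv.2.trans hV₂_lt.le⟩
  have hden : ∀ s ∈ Icc (-Z₂⁻¹) 0, ∀ v ∈ Icc (-1) V₂, fieldDen s v < 0 := fun s hs v hv =>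
    fieldDen_neg hZ₂ (hv₁ hv) (hZp le_rfl hv) hs
  obtain ⟨W, hW₀, hW_smooth, hW⟩ :=
    exists_hasDerivWithinAt_mem_Ioc_of_nonpos (f := fieldS γ) (n := ⊤) h0.1 hV₂_gt ENat.top_ne_zero
    (contDiffOn_uncurry_fieldS γ fun p hp => (hden p.1 hp.1 p.2 hp.2).ne)
    (fun s _ => by simp [fieldS, fieldNum])
    (fun s hs v hv => div_nonpos_of_nonneg_of_nonpos
      (fieldNum_nonneg hγ₀.le hZ₂ (hv₁ hv) (hZV le_rfl hv) hs) (hden s hs v hv).le)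
  have hmaps : MapsTo (fun Z => -Z⁻¹) (Ici Z₂) (Icc (-Z₂⁻¹) 0) := fun Z hZ =>
    ⟨neg_le_neg (inv_anti₀ hZ₂ hZ), neg_nonpos.2 (inv_nonneg.2 (hZ₂.trans_le hZ).le)⟩
  refine ⟨fun Z => W (-Z⁻¹), ?_, hW₀, fun Z hZ => ?_, fun Z hZ => ?_, W 0, ?_, ?_⟩
  · exact hW_smooth.comp (contDiffOn_id.inv fun Z hZ => (hZ₂.trans_le hZ).ne').neg hmaps
  · rw [← fieldS_neg_inv_mul_inv_sq (hZ₂.trans_le hZ).ne' (by linarith)]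
    exact hasDerivWithinAt_comp_neg_inv (hZ₂.trans_le hZ).ne' (hW _ (hmaps hZ)).1 hmaps
  · obtain ⟨hlo, hle⟩ := (hW _ (hmaps hZ)).2
    exact ⟨⟨hlo, hle.trans_lt hV₂_lt⟩, hZp hZ ⟨hlo.le, hle⟩, hZV hZ ⟨hlo.le, hle⟩,
      hle.trans_lt (hVZ₂.trans_le hZ)⟩
  · exact ⟨(hW 0 h0).2.1, (hW 0 h0).2.2.trans_lt hV₂_lt⟩
  · exact tendsto_comp_neg_inv_atTop (hW 0 h0).1.continuousWithinAt
      ((Filter.eventually_ge_atTop Z₂).mono fun Z hZ => hmaps hZ)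

end Stmt19
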